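/- Let an admissible chain-partition datum for e_1,…,e_M be given. For each (h,m) ∈ J with (h,m+1) ∈ J and each i ∈ Δ_{h,m}, j ∈ Δ_{h,m+1}, set μ_{ij} = (Σ_{k=l_1(h)}^{m} (ε(h) − k) r_{h,k}) / (r_{h,m} · r_{h,m+1} · ‖e_i‖² · ‖e_j‖²). Then every μ_{ij} ≥ 0, one has β̂ = Σ μ_{ij} (e_i − e_j) (the sum running over all such pairs (i,j)), and Σ μ_{ij} = ‖β̂‖². In particular, if β̂ ≠ 0 then β̂/‖β̂‖² lies in the convex hull of {e_i − e_j : i ∈ Δ_{h,m}, j ∈ Δ_{h,m+1} for some (h,m) ∈ J with (h,m+1) ∈ J}. -/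

import Mathlib

open scoped RealInnerProductSpace BigOperators

/-- A chain-partition datum for the pairwise orthogonal nonzero vectors `e 0, …, e (M-1)`:
a positive integer `L`, functions `l1 l2 : {1,…,L} → ℤ` with `l1 h ≤ l2 h`, and pairwise
disjoint nonempty subsets `Δ h m ⊆ {1,…,M}` for `(h,m)` in the index set
`J = {(h,m) : 1 ≤ h ≤ L, l1 h ≤ m ≤ l2 h}` whose union is `{1,…,M}`. -/
structure ChainPartitionDatum (M : ℕ) (V : Type*) [NormedAddCommGroup V]
    [InnerProductSpace ℝ V] (e : Fin M → V) where
  L : ℕ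
  Lpos : 0 < L
  l1 : Fin L → ℤ
  l2 : Fin L → ℤ
  l1_le_l2 : ∀ h, l1 h ≤ l2 h
  Δ : Fin L → ℤ → Finset (Fin M)
  Δ_nonempty : ∀ h m, l1 h ≤ m → m ≤ l2 h → (Δ h m).Nonempty
  Δ_disjoint : ∀ h m h' m', l1 h ≤ m → m ≤ l2 h → l1 h' ≤ m' → m' ≤ l2 h' →
    (h, m) ≠ (h', m') → Disjoint (Δ h m) (Δ h' m')
  Δ_union : ∀ i : Fin M, ∃ h m, l1 h ≤ m ∧ m ≤ l2 h ∧ i ∈ Δ h m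

namespace ChainPartitionDatum

variable {V : Type*} [NormedAddCommGroup V] [InnerProductSpace ℝ V]
variable {M : ℕ} {e : Fin M → V}

/-- `r h m = Σ_{j ∈ Δ_{h,m}} ‖e_j‖⁻²`. -/
noncomputable def r (D : ChainPartitionDatum M V e) (h : Fin D.L) (m : ℤ) : ℝ :=
  ∑ j ∈ D.Δ h m, (‖e j‖ ^ 2)⁻¹

/-- `ε h = (Σ_{m=l1 h}^{l2 h} m·r_{h,m}) / (Σ_{m=l1 h}^{l2 h} r_{h,m})`. -/
noncomputable def eps (D : ChainPartitionDatum M V e) (h : Fin D.L) : ℝ :=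
  (∑ m ∈ Finset.Icc (D.l1 h) (D.l2 h), (m : ℝ) * D.r h m) /
    ∑ m ∈ Finset.Icc (D.l1 h) (D.l2 h), D.r h m

/-- Admissibility: `−1/2 ≤ ε(h) < 1/2` for all `h` and `ε(1) > ε(2) > … > ε(L)`. -/
def Admissible (D : ChainPartitionDatum M V e) : Prop :=
  (∀ h, -(1 / 2 : ℝ) ≤ D.eps h ∧ D.eps h < 1 / 2) ∧ StrictAnti D.eps

/-- `β̂ = Σ_{h=1}^{L} Σ_{m=l1 h}^{l2 h} Σ_{j ∈ Δ_{h,m}} (ε(h) − m)·e_j/‖e_j‖²`. -/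
noncomputable def betaHat (D : ChainPartitionDatum M V e) : V :=
  ∑ h : Fin D.L, ∑ m ∈ Finset.Icc (D.l1 h) (D.l2 h), ∑ j ∈ D.Δ h m,
    ((D.eps h - (m : ℝ)) / ‖e j‖ ^ 2) • e j

end ChainPartitionDatum

namespace ChainPartitionDatum

variable {V : Type*} [NormedAddCommGroup V] [InnerProductSpace ℝ V]
variable {M : ℕ} {e : Fin M → V}

/-- The coefficient
`μ_{ij} = (Σ_{k=l1(h)}^{m} (ε(h) − k) r_{h,k}) / (r_{h,m} r_{h,m+1} ‖e_i‖² ‖e_j‖²)`. -/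
noncomputable def mu (D : ChainPartitionDatum M V e) (h : Fin D.L) (m : ℤ) (i j : Fin M) :
    ℝ :=
  (∑ k ∈ Finset.Icc (D.l1 h) m, (D.eps h - (k : ℝ)) * D.r h k) /
    (D.r h m * D.r h (m + 1) * ‖e i‖ ^ 2 * ‖e j‖ ^ 2)

end ChainPartitionDatum


/-!
Fix a chain `h` and put `t_k = (ε(h) - k) r_{h,k}`. By the definition of `ε(h)` these sum to
zero, so the partial sums `S_m = Σ_{k ≤ m} t_k` vanish at `m = l₂(h)` and, since `t_k` changes
sign only once, are nonnegative; this gives `μ_{ij} ≥ 0`. Over one pair of consecutive cells,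
`Σ μ_{ij} (e_i - e_j) = S_m (c_m - c_{m+1})`, where `c_m` is the `‖e_j‖⁻²`-weighted barycentre
of `Δ_{h,m}`, and Abel summation turns `Σ_m S_m (c_m - c_{m+1})` into `Σ_k t_k c_k`, the
`h`-th part of `β̂`. By orthogonality `⟪e_i, β̂⟫ = ε(h) - m` for `i ∈ Δ_{h,m}`, so
`⟪e_i - e_j, β̂⟫ = 1` for every pair and pairing the identity for `β̂` with `β̂` gives
`Σ μ_{ij} = ‖β̂‖²`. The convex-hull statement is the normalised form of this nonnegative
combination.
-/

namespace Finset

theorem sum_Icc_by_parts_int {W : Type*} [AddCommGroup W] [Module ℝ W] (t : ℤ → ℝ)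
    (w : ℤ → W) {a b : ℤ} (hab : a ≤ b) :
    ∑ m ∈ Icc a (b - 1), (∑ k ∈ Icc a m, t k) • (w m - w (m + 1)) =
      ∑ k ∈ Icc a b, t k • (w k - w b) := by
  induction b, hab using Int.leInduction with
  | base => simp
  | succ b hab ih =>
    rw [add_sub_cancel_right, ← insert_Icc_sub_one_right_eq_Icc hab, sum_insert (by simp), ih,
      ← insert_Icc_sub_one_right_eq_Icc (by omega : a ≤ b + 1), add_sub_cancel_right,
      sum_insert (by simp), sub_self, smul_zero, zero_add, sum_smul, ← sum_add_distrib]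
    refine sum_congr rfl fun k _ => ?_
    rw [← smul_add, sub_add_sub_cancel']

theorem sum_sum_mul_smul_sub {ι κ R W : Type*} [CommSemiring R] [AddCommGroup W] [Module R W]
    (A : Finset ι) (B : Finset κ) (a : ι → R) (b : κ → R) (x : ι → W) (y : κ → W) :
    ∑ i ∈ A, ∑ j ∈ B, (a i * b j) • (x i - y j) =
      (∑ j ∈ B, b j) • ∑ i ∈ A, a i • x i - (∑ i ∈ A, a i) • ∑ j ∈ B, b j • y j := by
  simp only [smul_sub, sum_sub_distrib, smul_sum, sum_smul, mul_smul]
  simp only [smul_comm (a _) (b _)]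
  congr 1
  exact sum_comm

end Finset

namespace ChainPartitionDatum

open Finset

variable {V : Type*} [NormedAddCommGroup V] [InnerProductSpace ℝ V]
variable {M : ℕ} {e : Fin M → V} (D : ChainPartitionDatum M V e)

noncomputable def partialSum (h : Fin D.L) (m : ℤ) : ℝ :=
  ∑ k ∈ Icc (D.l1 h) m, (D.eps h - k) * D.r h k

noncomputable def center (h : Fin D.L) (m : ℤ) : V :=
  (D.r h m)⁻¹ • ∑ j ∈ D.Δ h m, (‖e j‖ ^ 2)⁻¹ • e j

variable {D}

theorem r_nonneg (h : Fin D.L) (m : ℤ) : 0 ≤ D.r h m :=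
  sum_nonneg fun _ _ => by positivity

theorem r_pos (he : ∀ i, e i ≠ 0) {h : Fin D.L} {m : ℤ} (h1 : D.l1 h ≤ m) (h2 : m ≤ D.l2 h) :
    0 < D.r h m :=
  sum_pos (fun j _ => inv_pos.2 (pow_pos (norm_pos_iff.2 (he j)) 2)) (D.Δ_nonempty h m h1 h2)

theorem sum_eps_sub_mul_r (he : ∀ i, e i ≠ 0) (h : Fin D.L) :
    ∑ m ∈ Icc (D.l1 h) (D.l2 h), (D.eps h - m) * D.r h m = 0 := by
  have hr : ∑ m ∈ Icc (D.l1 h) (D.l2 h), D.r h m ≠ 0 :=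
    (sum_pos (fun m hm => r_pos he (mem_Icc.1 hm).1 (mem_Icc.1 hm).2)
      (nonempty_Icc.2 (D.l1_le_l2 h))).ne'
  simp only [sub_mul, sum_sub_distrib, ← mul_sum, eps, div_mul_cancel₀ _ hr, sub_self]

theorem partialSum_nonneg (he : ∀ i, e i ≠ 0) {h : Fin D.L} {m : ℤ} (h2 : m ≤ D.l2 h) :
    0 ≤ D.partialSum h m := by
  by_cases hm : (m : ℝ) ≤ D.eps h
  · refine sum_nonneg fun k hk => mul_nonneg ?_ (r_nonneg h k)
    have : (k : ℝ) ≤ m := by exact_mod_cast (mem_Icc.1 hk).2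
    linarith
  · have hsplit := sum_sdiff (f := fun k : ℤ => (D.eps h - k) * D.r h k)
      (Icc_subset_Icc_right (a := D.l1 h) h2)
    rw [sum_eps_sub_mul_r he] at hsplit
    rw [partialSum, ← neg_eq_of_add_eq_zero_right hsplit, neg_nonneg]
    refine sum_nonpos fun k hk => mul_nonpos_of_nonpos_of_nonneg ?_ (r_nonneg h k)
    have : (m : ℝ) < k := by
      simp only [mem_sdiff, mem_Icc, not_and, not_le] at hk
      exact_mod_cast hk.2 hk.1.1
    linarith

variable (D) in
theorem mu_nonneg (he : ∀ i, e i ≠ 0) {h : Fin D.L} {m : ℤ} (h2 : m ≤ D.l2 h) (i j : Fin M) :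
    0 ≤ D.mu h m i j :=
  div_nonneg (partialSum_nonneg he h2)
    (by have := r_nonneg h m; have := r_nonneg h (m + 1); positivity)

theorem mu_eq_partialSum_div_mul (h : Fin D.L) (m : ℤ) (i j : Fin M) :
    D.mu h m i j =
      D.partialSum h m / (D.r h m * D.r h (m + 1)) * ((‖e i‖ ^ 2)⁻¹ * (‖e j‖ ^ 2)⁻¹) := by
  simp only [mu, partialSum, div_eq_mul_inv, mul_inv]
  ring

theorem sum_sum_mu_smul_sub_eq_smul_center_sub (he : ∀ i, e i ≠ 0) {h : Fin D.L} {m : ℤ}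
    (h1 : D.l1 h ≤ m) (h2 : m + 1 ≤ D.l2 h) :
    ∑ i ∈ D.Δ h m, ∑ j ∈ D.Δ h (m + 1), D.mu h m i j • (e i - e j) =
      D.partialSum h m • (D.center h m - D.center h (m + 1)) := by
  have hr := (r_pos he h1 (by omega)).ne'
  have hr' := (r_pos he (by omega) h2).ne'
  have hmu : ∀ i j, D.mu h m i j • (e i - e j) =
      (D.partialSum h m / (D.r h m * D.r h (m + 1))) •
        (((‖e i‖ ^ 2)⁻¹ * (‖e j‖ ^ 2)⁻¹) • (e i - e j)) := fun i j => by
    rw [mu_eq_partialSum_div_mul, mul_smul]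
  simp only [hmu, ← smul_sum, sum_sum_mul_smul_sub, ← r.eq_1]
  rw [center, center, smul_sub, smul_sub, smul_smul, smul_smul, smul_smul, smul_smul]
  congr 2 <;> field_simp

theorem sum_Δ_smul_eq_smul_center (he : ∀ i, e i ≠ 0) {h : Fin D.L} {m : ℤ} (h1 : D.l1 h ≤ m)
    (h2 : m ≤ D.l2 h) :
    ∑ j ∈ D.Δ h m, ((D.eps h - m) / ‖e j‖ ^ 2) • e j =
      ((D.eps h - m) * D.r h m) • D.center h m := by
  rw [center, smul_smul, mul_assoc, mul_inv_cancel₀ (r_pos he h1 h2).ne', mul_one, smul_sum]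
  simp only [smul_smul, div_eq_mul_inv]

theorem sum_Icc_sum_sum_mu_smul_sub (he : ∀ i, e i ≠ 0) (h : Fin D.L) :
    ∑ m ∈ Icc (D.l1 h) (D.l2 h - 1), ∑ i ∈ D.Δ h m, ∑ j ∈ D.Δ h (m + 1),
        D.mu h m i j • (e i - e j) =
      ∑ m ∈ Icc (D.l1 h) (D.l2 h), ∑ j ∈ D.Δ h m, ((D.eps h - m) / ‖e j‖ ^ 2) • e j := by
  calc _ = ∑ m ∈ Icc (D.l1 h) (D.l2 h - 1),
        D.partialSum h m • (D.center h m - D.center h (m + 1)) :=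
        sum_congr rfl fun m hm => by
          obtain ⟨h1, h2⟩ := mem_Icc.1 hm
          exact sum_sum_mu_smul_sub_eq_smul_center_sub he h1 (by omega)
    _ = ∑ m ∈ Icc (D.l1 h) (D.l2 h), ((D.eps h - m) * D.r h m) • D.center h m := by
        simp only [partialSum]
        rw [sum_Icc_by_parts_int _ _ (D.l1_le_l2 h)]
        simp only [smul_sub, sum_sub_distrib, ← sum_smul, sum_eps_sub_mul_r he, zero_smul,
          sub_zero]
    _ = _ := sum_congr rfl fun m hm =>
        (sum_Δ_smul_eq_smul_center he (mem_Icc.1 hm).1 (mem_Icc.1 hm).2).symm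

variable (D) in
theorem betaHat_eq_sum_mu_smul_sub (he : ∀ i, e i ≠ 0) :
    D.betaHat = ∑ h : Fin D.L, ∑ m ∈ Icc (D.l1 h) (D.l2 h - 1),
      ∑ i ∈ D.Δ h m, ∑ j ∈ D.Δ h (m + 1), D.mu h m i j • (e i - e j) :=
  sum_congr rfl fun h _ => (sum_Icc_sum_sum_mu_smul_sub he h).symm

theorem eq_of_mem_Δ {h h' : Fin D.L} {m m' : ℤ} {i : Fin M} (h1 : D.l1 h ≤ m) (h2 : m ≤ D.l2 h)
    (h1' : D.l1 h' ≤ m') (h2' : m' ≤ D.l2 h') (hi : i ∈ D.Δ h m) (hi' : i ∈ D.Δ h' m') :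
    (h, m) = (h', m') := by
  by_contra hne
  exact disjoint_left.1 (D.Δ_disjoint h m h' m' h1 h2 h1' h2' hne) hi hi'

theorem sum_sum_ite_mem {R : Type*} [AddCommMonoid R] (g : Fin D.L → ℤ → R) {h : Fin D.L}
    {m : ℤ} {i : Fin M} (h1 : D.l1 h ≤ m) (h2 : m ≤ D.l2 h) (hi : i ∈ D.Δ h m) :
    ∑ h' : Fin D.L, ∑ m' ∈ Icc (D.l1 h') (D.l2 h'), (if i ∈ D.Δ h' m' then g h' m' else 0) =
      g h m := by
  rw [sum_eq_single h, sum_eq_single m, if_pos hi]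
  · intro m' hm' hne
    refine if_neg fun hi' => hne ?_
    exact (Prod.ext_iff.1 (eq_of_mem_Δ h1 h2 (mem_Icc.1 hm').1 (mem_Icc.1 hm').2 hi hi')).2.symm
  · exact fun hm => absurd (mem_Icc.2 ⟨h1, h2⟩) hm
  · intro h' _ hne
    refine sum_eq_zero fun m' hm' => if_neg fun hi' => hne ?_
    exact (Prod.ext_iff.1 (eq_of_mem_Δ h1 h2 (mem_Icc.1 hm').1 (mem_Icc.1 hm').2 hi hi')).1.symm
  · exact fun hh => absurd (mem_univ h) hh

theorem inner_e_betaHat (he : ∀ i, e i ≠ 0) (horth : ∀ i j : Fin M, i ≠ j → ⟪e i, e j⟫ = 0)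
    {h : Fin D.L} {m : ℤ} {i : Fin M} (h1 : D.l1 h ≤ m) (h2 : m ≤ D.l2 h) (hi : i ∈ D.Δ h m) :
    ⟪e i, D.betaHat⟫ = D.eps h - m := by
  have hinner : ∀ j, ⟪e i, e j⟫ = if j = i then ‖e i‖ ^ 2 else 0 := fun j => by
    split_ifs with hj
    · rw [hj, real_inner_self_eq_norm_sq]
    · exact horth i j (Ne.symm hj)
  simp only [betaHat, inner_sum, real_inner_smul_right, hinner, mul_ite, mul_zero, sum_ite_eq']
  rw [sum_sum_ite_mem (fun h' m' => (D.eps h' - m') / ‖e i‖ ^ 2 * ‖e i‖ ^ 2) h1 h2 hi,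
    div_mul_cancel₀ _ (pow_ne_zero 2 (norm_ne_zero_iff.2 (he i)))]

variable (D) in
theorem sum_mu_eq_norm_sq (he : ∀ i, e i ≠ 0) (horth : ∀ i j : Fin M, i ≠ j → ⟪e i, e j⟫ = 0) :
    ∑ h : Fin D.L, ∑ m ∈ Icc (D.l1 h) (D.l2 h - 1), ∑ i ∈ D.Δ h m, ∑ j ∈ D.Δ h (m + 1),
      D.mu h m i j = ‖D.betaHat‖ ^ 2 := by
  rw [← real_inner_self_eq_norm_sq]
  nth_rw 1 [D.betaHat_eq_sum_mu_smul_sub he]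
  simp only [sum_inner, real_inner_smul_left, inner_sub_left]
  refine sum_congr rfl fun h _ => sum_congr rfl fun m hm => ?_
  obtain ⟨h1, h2⟩ := mem_Icc.1 hm
  refine sum_congr rfl fun i hi => sum_congr rfl fun j hj => ?_
  rw [inner_e_betaHat he horth h1 (by omega) hi,
    inner_e_betaHat he horth (by omega) (by omega) hj]
  push_cast
  ring

variable (D) in
noncomputable def links : Finset (Σ _ : Fin D.L, Σ _ : ℤ, Fin M × Fin M) :=
  univ.sigma fun h => (Icc (D.l1 h) (D.l2 h - 1)).sigma fun m => D.Δ h m ×ˢ D.Δ h (m + 1)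

variable (D) in
theorem mem_links {h : Fin D.L} {m : ℤ} {i j : Fin M} :
    ⟨h, m, i, j⟩ ∈ D.links ↔
      D.l1 h ≤ m ∧ m + 1 ≤ D.l2 h ∧ i ∈ D.Δ h m ∧ j ∈ D.Δ h (m + 1) := by
  simp only [links, mem_sigma, mem_univ, mem_Icc, mem_product, true_and, Int.le_sub_one_iff,
    Int.add_one_le_iff, and_assoc]

variable (D) in
theorem sum_links {W : Type*} [AddCommMonoid W] (f : Fin D.L → ℤ → Fin M → Fin M → W) :
    ∑ p ∈ D.links, f p.1 p.2.1 p.2.2.1 p.2.2.2 =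
      ∑ h : Fin D.L, ∑ m ∈ Icc (D.l1 h) (D.l2 h - 1), ∑ i ∈ D.Δ h m, ∑ j ∈ D.Δ h (m + 1),
        f h m i j := by
  simp only [links, sum_sigma, sum_product]

end ChainPartitionDatum

theorem betaHat_eq_sum_mu_general
    {V : Type*} [NormedAddCommGroup V] [InnerProductSpace ℝ V]
    {M : ℕ} (e : Fin M → V) (he : ∀ i, e i ≠ 0)
    (horth : ∀ i j : Fin M, i ≠ j → ⟪e i, e j⟫ = 0)
    (D : ChainPartitionDatum M V e) :
    (∀ h : Fin D.L, ∀ m ∈ Finset.Icc (D.l1 h) (D.l2 h - 1), ∀ i ∈ D.Δ h m,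
        ∀ j ∈ D.Δ h (m + 1), 0 ≤ D.mu h m i j) ∧
      D.betaHat = ∑ h : Fin D.L, ∑ m ∈ Finset.Icc (D.l1 h) (D.l2 h - 1),
          ∑ i ∈ D.Δ h m, ∑ j ∈ D.Δ h (m + 1), D.mu h m i j • (e i - e j) ∧
      (∑ h : Fin D.L, ∑ m ∈ Finset.Icc (D.l1 h) (D.l2 h - 1),
          ∑ i ∈ D.Δ h m, ∑ j ∈ D.Δ h (m + 1), D.mu h m i j) = ‖D.betaHat‖ ^ 2 ∧
      (D.betaHat ≠ 0 →
        (‖D.betaHat‖ ^ 2)⁻¹ • D.betaHat ∈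
          convexHull ℝ {x : V | ∃ (h : Fin D.L) (m : ℤ) (i j : Fin M),
            D.l1 h ≤ m ∧ m + 1 ≤ D.l2 h ∧ i ∈ D.Δ h m ∧ j ∈ D.Δ h (m + 1) ∧
            x = e i - e j}) := by
  have hmu : ∀ h : Fin D.L, ∀ m ∈ Finset.Icc (D.l1 h) (D.l2 h - 1), ∀ i ∈ D.Δ h m,
      ∀ j ∈ D.Δ h (m + 1), 0 ≤ D.mu h m i j :=
    fun h m hm i _ j _ => D.mu_nonneg he (by linarith [(Finset.mem_Icc.1 hm).2]) i j
  refine ⟨hmu, D.betaHat_eq_sum_mu_smul_sub he, D.sum_mu_eq_norm_sq he horth, fun hne => ?_⟩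
  have hcenter : D.links.centerMass (fun p => D.mu p.1 p.2.1 p.2.2.1 p.2.2.2)
      (fun p => e p.2.2.1 - e p.2.2.2) = (‖D.betaHat‖ ^ 2)⁻¹ • D.betaHat := by
    rw [Finset.centerMass, D.sum_links D.mu, D.sum_mu_eq_norm_sq he horth,
      D.sum_links fun h m i j => D.mu h m i j • (e i - e j),
      ← D.betaHat_eq_sum_mu_smul_sub he]
  rw [← hcenter]
  refine Finset.centerMass_mem_convexHull _ ?_ ?_ ?_
  · rintro ⟨h, m, i, j⟩ hp
    obtain ⟨h1, h2, hi, hj⟩ := D.mem_links.1 hp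
    exact hmu h m (Finset.mem_Icc.2 ⟨h1, by omega⟩) i hi j hj
  · rw [D.sum_links D.mu, D.sum_mu_eq_norm_sq he horth]
    positivity
  · rintro ⟨h, m, i, j⟩ hp
    obtain ⟨h1, h2, hi, hj⟩ := D.mem_links.1 hp
    exact ⟨h, m, i, j, h1, h2, hi, hj, rfl⟩

/-- For an admissible chain-partition datum: all coefficients `μ_{ij}` are
nonnegative, `β̂ = Σ μ_{ij} (e_i − e_j)` and `Σ μ_{ij} = ‖β̂‖²`; in particular, if `β̂ ≠ 0`
then `β̂/‖β̂‖²` lies in the convex hull of the corresponding differences `e_i − e_j`. -/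
theorem betaHat_eq_sum_mu
    {V : Type*} [NormedAddCommGroup V] [InnerProductSpace ℝ V]
    {M : ℕ} (hM : 0 < M) (e : Fin M → V) (he : ∀ i, e i ≠ 0)
    (horth : ∀ i j : Fin M, i ≠ j → ⟪e i, e j⟫ = 0)
    (D : ChainPartitionDatum M V e) (hD : D.Admissible) :
    (∀ h : Fin D.L, ∀ m ∈ Finset.Icc (D.l1 h) (D.l2 h - 1), ∀ i ∈ D.Δ h m,
        ∀ j ∈ D.Δ h (m + 1), 0 ≤ D.mu h m i j) ∧
      D.betaHat = ∑ h : Fin D.L, ∑ m ∈ Finset.Icc (D.l1 h) (D.l2 h - 1),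
          ∑ i ∈ D.Δ h m, ∑ j ∈ D.Δ h (m + 1), D.mu h m i j • (e i - e j) ∧
      (∑ h : Fin D.L, ∑ m ∈ Finset.Icc (D.l1 h) (D.l2 h - 1),
          ∑ i ∈ D.Δ h m, ∑ j ∈ D.Δ h (m + 1), D.mu h m i j) = ‖D.betaHat‖ ^ 2 ∧
      (D.betaHat ≠ 0 →
        (‖D.betaHat‖ ^ 2)⁻¹ • D.betaHat ∈
          convexHull ℝ {x : V | ∃ (h : Fin D.L) (m : ℤ) (i j : Fin M),
            D.l1 h ≤ m ∧ m + 1 ≤ D.l2 h ∧ i ∈ D.Δ h m ∧ j ∈ D.Δ h (m + 1) ∧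
            x = e i - e j}) :=
  betaHat_eq_sum_mu_general e he horth D
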